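/- arXiv:1511.06845 — 6 statements merged into one kernel-verified Lean document; each statement's English description precedes it below -/
import Mathlib

section
/- Suppose N̂ = ZᵀAZ is nonsingular, where Z has orthonormal columns spanning null(B). If w solves ZZᵀ A ZZᵀ w = ZZᵀ(f − A x_p), then v := Zᵀw is the unique solution of ZᵀAZ v = Zᵀ(f − A x_p); consequently the recovered component x_n = ZZᵀ w is uniquely determined by A, Z, f, x_p (independent of the choice of solution w). -/
open Matrix

theorem mulVec_mulVec_of_projected_mulVec_eq {R m n : Type*} [CommRing R] [Fintype m]
    [Fintype n] [DecidableEq n] {Z : Matrix m n R} {L : Matrix n m R} (hLZ : L * Z = 1)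
    {A : Matrix m m R} {b u : m → R} (hu : (Z * L * A * Z * L) *ᵥ u = (Z * L) *ᵥ b) :
    (L * A * Z) *ᵥ (L *ᵥ u) = L *ᵥ b := by
  have h := congrArg (L *ᵥ ·) hu
  simp only [mulVec_mulVec, ← Matrix.mul_assoc, hLZ, Matrix.one_mul] at h ⊢
  exact h

theorem stmt5 {n k : ℕ} (A : Matrix (Fin n) (Fin n) ℝ)
    (Z : Matrix (Fin n) (Fin k) ℝ) (hZ : Zᵀ * Z = 1)
    (hN : IsUnit (Zᵀ * A * Z)) (f xp : Fin n → ℝ) (w : Fin n → ℝ)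
    (hw : (Z * Zᵀ * A * Z * Zᵀ).mulVec w = (Z * Zᵀ).mulVec (f - A.mulVec xp)) :
    (Zᵀ * A * Z).mulVec (Zᵀ.mulVec w) = Zᵀ.mulVec (f - A.mulVec xp) ∧
    (∀ v, (Zᵀ * A * Z).mulVec v = Zᵀ.mulVec (f - A.mulVec xp) → v = Zᵀ.mulVec w) ∧
    (∀ w', (Z * Zᵀ * A * Z * Zᵀ).mulVec w' = (Z * Zᵀ).mulVec (f - A.mulVec xp) →
      (Z * Zᵀ).mulVec w' = (Z * Zᵀ).mulVec w) := by
  have hsol := mulVec_mulVec_of_projected_mulVec_eq hZ hw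
  have huniq : ∀ v, (Zᵀ * A * Z) *ᵥ v = Zᵀ *ᵥ (f - A *ᵥ xp) → v = Zᵀ *ᵥ w := fun v hv =>
    mulVec_injective_iff_isUnit.mpr hN (hv.trans hsol.symm)
  refine ⟨hsol, huniq, fun w' hw' => ?_⟩
  rw [← mulVec_mulVec, ← mulVec_mulVec,
    huniq _ (mulVec_mulVec_of_projected_mulVec_eq hZ hw')]
end

section
/- Suppose f ∈ range(A) + range(Bᵀ). Let x_p be the minimum-norm least-squares solution of Bx = g (so x_p ∈ range(Bᵀ)), and let w be the minimum-norm solution of ΠAΠ w = Π(f − A x_p), where Π is the orthogonal projector onto null(B). Then x = x_p + Πw minimizes ‖x‖ among all vectors of the form x_p + x_n with x_n ∈ null(B) satisfying ZᵀA(x_p + x_n) = Zᵀf, and all such x minimize ‖g − Bx‖. -/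
/-! The constraint `ZᵀA(x_p + x_n) = Zᵀf` on `x_n = Z y ∈ null(B)` is, after applying the
injective map `Z`, exactly the projected system `ΠAΠ x_n = Π(f − A x_p)`. Hence `w` solves it
in the form `x_n = Πw`, and every admissible `x_n` is a solution, so `‖Πw‖ ≤ ‖w‖ ≤ ‖x_n‖`.
Since `x_p ∈ range(Bᵀ) ⊥ null(B)`, Pythagoras turns this into `‖x_p + Πw‖ ≤ ‖x_p + x_n‖`.
Adding a null vector of `B` does not change the residual, so all such `x` are least-squares
solutions along with `x_p`. -/

open Matrix

noncomputable def euclNorm {n : ℕ} (v : Fin n → ℝ) : ℝ := Real.sqrt (v ⬝ᵥ v)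

theorem euclNorm_le_euclNorm_iff {n : ℕ} {a b : Fin n → ℝ} :
    euclNorm a ≤ euclNorm b ↔ a ⬝ᵥ a ≤ b ⬝ᵥ b :=
  Real.sqrt_le_sqrt_iff (Finset.sum_nonneg fun i _ => mul_self_nonneg (b i))

namespace Matrix

variable {ι κ μ R : Type*} [Fintype κ]

section CommRing

variable [CommRing R]

theorem isSymm_mul_transpose (Z : Matrix ι κ R) : (Z * Zᵀ).IsSymm := by
  rw [IsSymm, transpose_mul, transpose_transpose]

variable [Fintype ι]

theorem dotProduct_add_self_of_dotProduct_eq_zero {x y : ι → R} (h : x ⬝ᵥ y = 0) :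
    (x + y) ⬝ᵥ (x + y) = x ⬝ᵥ x + y ⬝ᵥ y := by
  rw [add_dotProduct, dotProduct_add, dotProduct_add, h, dotProduct_comm y x, h,
    add_zero, zero_add]

theorem dotProduct_eq_zero_of_mem_range_transpose [Fintype μ] {B : Matrix μ ι R} {x y : ι → R}
    (hx : x ∈ LinearMap.range Bᵀ.mulVecLin) (hy : B *ᵥ y = 0) : x ⬝ᵥ y = 0 := by
  obtain ⟨v, rfl⟩ := hx
  rw [mulVecLin_apply, mulVec_transpose, ← dotProduct_mulVec, hy, dotProduct_zero]

variable [DecidableEq κ] {Z : Matrix ι κ R}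

theorem isIdempotentElem_mul_transpose (hZ : Zᵀ * Z = 1) : IsIdempotentElem (Z * Zᵀ) := by
  rw [IsIdempotentElem, Matrix.mul_assoc, ← Matrix.mul_assoc Zᵀ, hZ, Matrix.one_mul]

theorem mulVec_injective_of_transpose_mul_eq_one (hZ : Zᵀ * Z = 1) :
    Function.Injective (Z *ᵥ ·) :=
  Function.LeftInverse.injective (g := (Zᵀ *ᵥ ·)) fun y => by
    dsimp only
    rw [mulVec_mulVec, hZ, one_mulVec]

theorem mul_transpose_mulVec_mulVec (hZ : Zᵀ * Z = 1) (y : κ → R) :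
    (Z * Zᵀ) *ᵥ (Z *ᵥ y) = Z *ᵥ y := by
  rw [mulVec_mulVec, Matrix.mul_assoc, hZ, Matrix.mul_one]

theorem projected_mulVec_eq_iff (hZ : Zᵀ * Z = 1) (A : Matrix ι ι R) (w r : ι → R) :
    (Z * Zᵀ * A * (Z * Zᵀ)) *ᵥ w = (Z * Zᵀ) *ᵥ r ↔
      Zᵀ *ᵥ (A *ᵥ ((Z * Zᵀ) *ᵥ w)) = Zᵀ *ᵥ r := by
  simp only [← mulVec_mulVec]
  exact (mulVec_injective_of_transpose_mul_eq_one hZ).eq_iff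

end CommRing

theorem dotProduct_mulVec_self_le [Fintype ι] {P : Matrix ι ι ℝ} (hsymm : P.IsSymm)
    (hidem : IsIdempotentElem P) (v : ι → ℝ) : P *ᵥ v ⬝ᵥ P *ᵥ v ≤ v ⬝ᵥ v := by
  have horth : P *ᵥ v ⬝ᵥ (v - P *ᵥ v) = 0 := by
    rw [dotProduct_sub, dotProduct_mulVec, ← mulVec_transpose, hsymm.eq, mulVec_mulVec,
      hidem.eq, dotProduct_comm, sub_self]
  have hsplit := dotProduct_add_self_of_dotProduct_eq_zero horth
  rw [add_sub_cancel] at hsplit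
  rw [hsplit, le_add_iff_nonneg_right]
  exact Finset.sum_nonneg fun i _ => mul_self_nonneg _

end Matrix

theorem stmt8_general {m n k : ℕ} (A : Matrix (Fin n) (Fin n) ℝ)
    (B : Matrix (Fin m) (Fin n) ℝ) (f : Fin n → ℝ) (g : Fin m → ℝ)
    (Z : Matrix (Fin n) (Fin k) ℝ) (hZ : Zᵀ * Z = 1)
    (hZr : LinearMap.range Z.mulVecLin = LinearMap.ker B.mulVecLin)
    (xp : Fin n → ℝ)
    (hxp_range : xp ∈ LinearMap.range Bᵀ.mulVecLin)
    (hxp_ls : ∀ u, euclNorm (g - B.mulVec xp) ≤ euclNorm (g - B.mulVec u))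
    (w : Fin n → ℝ)
    (hw : ((Z * Zᵀ) * A * (Z * Zᵀ)).mulVec w = (Z * Zᵀ).mulVec (f - A.mulVec xp))
    (hw_min : ∀ w', ((Z * Zᵀ) * A * (Z * Zᵀ)).mulVec w'
        = (Z * Zᵀ).mulVec (f - A.mulVec xp) → euclNorm w ≤ euclNorm w') :
    Zᵀ.mulVec (A.mulVec (xp + (Z * Zᵀ).mulVec w)) = Zᵀ.mulVec f ∧
    (∀ xn, B.mulVec xn = 0 →
      Zᵀ.mulVec (A.mulVec (xp + xn)) = Zᵀ.mulVec f →
      euclNorm (xp + (Z * Zᵀ).mulVec w) ≤ euclNorm (xp + xn) ∧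
      ∀ u, euclNorm (g - B.mulVec (xp + xn)) ≤ euclNorm (g - B.mulVec u)) := by
  have hPw_ker : B *ᵥ ((Z * Zᵀ) *ᵥ w) = 0 := by
    rw [← mulVec_mulVec]
    exact LinearMap.mem_ker.1 (hZr.le ⟨Zᵀ *ᵥ w, rfl⟩)
  refine ⟨?_, fun xn hxn hxn_eq => ⟨?_, fun u => ?_⟩⟩
  · rw [mulVec_add, mulVec_add, (projected_mulVec_eq_iff hZ A w _).1 hw, mulVec_sub,
      add_sub_cancel]
  · obtain ⟨y, rfl⟩ : xn ∈ LinearMap.range Z.mulVecLin := hZr ▸ LinearMap.mem_ker.2 hxn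
    have hsol : (Z * Zᵀ * A * (Z * Zᵀ)) *ᵥ (Z *ᵥ y) = (Z * Zᵀ) *ᵥ (f - A *ᵥ xp) := by
      rw [projected_mulVec_eq_iff hZ, mul_transpose_mulVec_mulVec hZ, mulVec_sub,
        eq_sub_iff_add_eq, ← mulVec_add, ← mulVec_add, add_comm]
      exact hxn_eq
    rw [euclNorm_le_euclNorm_iff,
      dotProduct_add_self_of_dotProduct_eq_zero
        (dotProduct_eq_zero_of_mem_range_transpose hxp_range hPw_ker),
      dotProduct_add_self_of_dotProduct_eq_zero
        (dotProduct_eq_zero_of_mem_range_transpose hxp_range hxn), add_le_add_iff_left]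
    calc (Z * Zᵀ) *ᵥ w ⬝ᵥ (Z * Zᵀ) *ᵥ w ≤ w ⬝ᵥ w :=
          dotProduct_mulVec_self_le (isSymm_mul_transpose Z)
            (isIdempotentElem_mul_transpose hZ) w
      _ ≤ Z *ᵥ y ⬝ᵥ Z *ᵥ y := euclNorm_le_euclNorm_iff.1 (hw_min _ hsol)
  · rw [mulVec_add, hxn, add_zero]
    exact hxp_ls u

theorem stmt8 {m n k : ℕ} (A : Matrix (Fin n) (Fin n) ℝ)
    (B : Matrix (Fin m) (Fin n) ℝ) (f : Fin n → ℝ) (g : Fin m → ℝ)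
    (Z : Matrix (Fin n) (Fin k) ℝ) (hZ : Zᵀ * Z = 1)
    (hZr : LinearMap.range Z.mulVecLin = LinearMap.ker B.mulVecLin)
    (hf : ∃ u v, f = A.mulVec u + Bᵀ.mulVec v)
    (xp : Fin n → ℝ)
    (hxp_range : xp ∈ LinearMap.range Bᵀ.mulVecLin)
    (hxp_ls : ∀ u, euclNorm (g - B.mulVec xp) ≤ euclNorm (g - B.mulVec u))
    (hxp_min : ∀ u, euclNorm (g - B.mulVec u) = euclNorm (g - B.mulVec xp) →
      euclNorm xp ≤ euclNorm u)
    (w : Fin n → ℝ)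
    (hw : ((Z * Zᵀ) * A * (Z * Zᵀ)).mulVec w = (Z * Zᵀ).mulVec (f - A.mulVec xp))
    (hw_min : ∀ w', ((Z * Zᵀ) * A * (Z * Zᵀ)).mulVec w'
        = (Z * Zᵀ).mulVec (f - A.mulVec xp) → euclNorm w ≤ euclNorm w') :
    Zᵀ.mulVec (A.mulVec (xp + (Z * Zᵀ).mulVec w)) = Zᵀ.mulVec f ∧
    (∀ xn, B.mulVec xn = 0 →
      Zᵀ.mulVec (A.mulVec (xp + xn)) = Zᵀ.mulVec f →
      euclNorm (xp + (Z * Zᵀ).mulVec w) ≤ euclNorm (xp + xn) ∧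
      ∀ u, euclNorm (g - B.mulVec (xp + xn)) ≤ euclNorm (g - B.mulVec u)) :=
  stmt8_general A B f g Z hZ hZr xp hxp_range hxp_ls w hw hw_min
end

section
/- Assume ZᵀGZ is nonsingular, where Z has orthonormal columns, and let P_G = Z(ZᵀGZ)⁻¹Zᵀ. Then for any w, the equation P_G · (ZZᵀAZZᵀ) w = P_G · ZZᵀ b holds if and only if (ZᵀGZ)⁻¹ ZᵀAZ (Zᵀw) = (ZᵀGZ)⁻¹ Zᵀ b; i.e., left-preconditioning the projected null-space equation by P_G is equivalent to left-preconditioning the null-space equation by ZᵀGZ. -/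
/-!
Since `Zᵀ Z = I`, the factor `Zᵀ Z` in the middle of `P_G · Z Zᵀ A Z Zᵀ` and of `P_G · Z Zᵀ` collapses,
so both sides of the projected equation are `Z` applied to the corresponding sides of the
preconditioned null-space equation (the left side evaluated at `Zᵀ w`). A matrix with a left
inverse is injective, so `Z` can be cancelled.
-/

open Matrix

namespace Matrix

variable {R : Type*} [CommRing R] {m l p : Type*} [Fintype m] [Fintype l] [DecidableEq l]

theorem mulVec_injective_of_mul_eq_one {B : Matrix l m R} {Z : Matrix m l R} (h : B * Z = 1) :
    Function.Injective Z.mulVec :=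
  Function.LeftInverse.injective (g := B.mulVec) fun v => by rw [mulVec_mulVec, h, one_mulVec]

theorem mul_mul_transpose_mul_mul_cancel {Z : Matrix m l R} (hZ : Zᵀ * Z = 1)
    (M : Matrix l l R) (X : Matrix l p R) : Z * M * Zᵀ * (Z * X) = Z * (M * X) := by
  simp only [Matrix.mul_assoc]
  rw [← Matrix.mul_assoc Zᵀ, hZ, Matrix.one_mul]

end Matrix

theorem stmt10_general {n k : ℕ} (A G : Matrix (Fin n) (Fin n) ℝ)
    (Z : Matrix (Fin n) (Fin k) ℝ) (hZ : Zᵀ * Z = 1)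
    (b : Fin n → ℝ) :
    ∀ w : Fin n → ℝ,
      ((Z * (Zᵀ * G * Z)⁻¹ * Zᵀ) * (Z * Zᵀ * A * Z * Zᵀ)).mulVec w
          = ((Z * (Zᵀ * G * Z)⁻¹ * Zᵀ) * (Z * Zᵀ)).mulVec b ↔
      ((Zᵀ * G * Z)⁻¹ * (Zᵀ * A * Z)).mulVec (Zᵀ.mulVec w)
          = ((Zᵀ * G * Z)⁻¹ * Zᵀ).mulVec b := by
  intro w
  set M := (Zᵀ * G * Z)⁻¹
  have hlhs : ((Z * M * Zᵀ) * (Z * Zᵀ * A * Z * Zᵀ)).mulVec w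
      = Z.mulVec ((M * (Zᵀ * A * Z)).mulVec (Zᵀ.mulVec w)) := by
    rw [show Z * Zᵀ * A * Z * Zᵀ = Z * (Zᵀ * A * Z * Zᵀ) by simp only [Matrix.mul_assoc],
      mul_mul_transpose_mul_mul_cancel hZ, mulVec_mulVec, mulVec_mulVec]
    simp only [Matrix.mul_assoc]
  have hrhs : ((Z * M * Zᵀ) * (Z * Zᵀ)).mulVec b = Z.mulVec ((M * Zᵀ).mulVec b) := by
    rw [mul_mul_transpose_mul_mul_cancel hZ, mulVec_mulVec]
  rw [hlhs, hrhs]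
  exact (mulVec_injective_of_mul_eq_one hZ).eq_iff

theorem stmt10 {n k : ℕ} (A G : Matrix (Fin n) (Fin n) ℝ)
    (Z : Matrix (Fin n) (Fin k) ℝ) (hZ : Zᵀ * Z = 1)
    (hG : IsUnit (Zᵀ * G * Z)) (b : Fin n → ℝ) :
    ∀ w : Fin n → ℝ,
      ((Z * (Zᵀ * G * Z)⁻¹ * Zᵀ) * (Z * Zᵀ * A * Z * Zᵀ)).mulVec w
          = ((Z * (Zᵀ * G * Z)⁻¹ * Zᵀ) * (Z * Zᵀ)).mulVec b ↔
      ((Zᵀ * G * Z)⁻¹ * (Zᵀ * A * Z)).mulVec (Zᵀ.mulVec w)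
          = ((Zᵀ * G * Z)⁻¹ * Zᵀ).mulVec b :=
  stmt10_general A G Z hZ b
end

section
/- Assume ZᵀGZ is nonsingular, where Z has orthonormal columns. Let N = ZZᵀAZZᵀ and P_G = Z(ZᵀGZ)⁻¹Zᵀ. Then null(P_G N) = null(N). -/
/-!
Since `ZᵀZ = 1`, both `P_G N` and `N` factor as `X * (Zᵀ A Z Zᵀ)` with a left-invertible `X`:
`N = Z * (Zᵀ A Z Zᵀ)` and `P_G N = (Z (ZᵀGZ)⁻¹) * (Zᵀ A Z Zᵀ)`, where `(ZᵀGZ) Zᵀ` is a left inverse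
of `Z (ZᵀGZ)⁻¹`. Left-invertible factors do not change the null space, so both null spaces equal
that of `Zᵀ A Z Zᵀ`.
-/

open Matrix

namespace Matrix

variable {l m n R : Type*} [CommRing R] [Fintype l] [Fintype m] [Fintype n] [DecidableEq m]

theorem ker_mulVecLin_eq_bot_of_mul_eq_one {L : Matrix m l R} {M : Matrix l m R}
    (hLM : L * M = 1) : LinearMap.ker M.mulVecLin = ⊥ :=
  ker_mulVecLin_eq_bot_iff.2 fun v hv => by
    rw [← one_mulVec v, ← hLM, ← mulVec_mulVec, hv, mulVec_zero]

theorem ker_mulVecLin_mul_of_mul_eq_one {L : Matrix m l R} {M : Matrix l m R}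
    (hLM : L * M = 1) (B : Matrix m n R) :
    LinearMap.ker (M * B).mulVecLin = LinearMap.ker B.mulVecLin := by
  rw [mulVecLin_mul, LinearMap.ker_comp_of_ker_eq_bot _ (ker_mulVecLin_eq_bot_of_mul_eq_one hLM)]

end Matrix

theorem stmt11 {n k : ℕ} (A G : Matrix (Fin n) (Fin n) ℝ)
    (Z : Matrix (Fin n) (Fin k) ℝ) (hZ : Zᵀ * Z = 1)
    (hG : IsUnit (Zᵀ * G * Z)) :
    LinearMap.ker ((Z * (Zᵀ * G * Z)⁻¹ * Zᵀ) * (Z * Zᵀ * A * Z * Zᵀ)).mulVecLin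
      = LinearMap.ker (Z * Zᵀ * A * Z * Zᵀ).mulVecLin := by
  set B := Zᵀ * G * Z
  set C := Zᵀ * A * Z * Zᵀ
  have hPN : (Z * B⁻¹ * Zᵀ) * (Z * Zᵀ * A * Z * Zᵀ) = (Z * B⁻¹) * C := by
    simp only [C, Matrix.mul_assoc]
    rw [← Matrix.mul_assoc Zᵀ Z, hZ, Matrix.one_mul]
  have hN : Z * Zᵀ * A * Z * Zᵀ = Z * C := by
    simp only [C, Matrix.mul_assoc]
  have hleft : (B * Zᵀ) * (Z * B⁻¹) = 1 := by
    rw [Matrix.mul_assoc, ← Matrix.mul_assoc Zᵀ, hZ, Matrix.one_mul,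
      mul_nonsing_inv _ ((isUnit_iff_isUnit_det _).mp hG)]
  rw [hPN, hN, ker_mulVecLin_mul_of_mul_eq_one hleft, ker_mulVecLin_mul_of_mul_eq_one hZ]
end

section
/- Suppose s and t solve the system G s + U t = b, Uᵀ s = 0, where G is nonsingular, U has orthonormal columns, Z has orthonormal columns with range(Z) = null(Uᵀ), and ZᵀGZ is invertible. Then s = Z(ZᵀGZ)⁻¹Zᵀ b. -/
/-!
Since `Uᵀ s = 0` and `range Z = ker Uᵀ`, we can write `s = Z w`. The same hypothesis gives
`Zᵀ U = 0`, so applying `Zᵀ` to `G s + U t = b` eliminates the multiplier `t` and leaves the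
reduced system `(Zᵀ G Z) w = Zᵀ b`, which is solved by inverting `Zᵀ G Z`.
-/

open Matrix

namespace Matrix

variable {R : Type*} {l m n : Type*} [Fintype m] [Fintype n]

theorem mul_eq_zero_of_range_mulVecLin_le_ker [CommSemiring R]
    {A : Matrix l m R} {B : Matrix m n R}
    (h : LinearMap.range B.mulVecLin ≤ LinearMap.ker A.mulVecLin) : A * B = 0 := by
  refine mulVec_injective (funext fun v => ?_)
  have hcomp : A.mulVecLin ∘ₗ B.mulVecLin = 0 := LinearMap.range_le_ker_iff.mp h
  simpa [← mulVec_mulVec] using LinearMap.congr_fun hcomp v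

theorem mulVec_reduced_eq_of_saddle_point [Semiring R] {p : Type*} [Fintype p]
    {G : Matrix m m R} {U : Matrix m p R} {Z : Matrix m n R} (hZU : Zᵀ * U = 0)
    {w : n → R} {t : p → R} {b : m → R} (h : G *ᵥ (Z *ᵥ w) + U *ᵥ t = b) :
    (Zᵀ * G * Z) *ᵥ w = Zᵀ *ᵥ b := by
  rw [← h, mulVec_add, mulVec_mulVec t Zᵀ U, hZU, zero_mulVec, add_zero]
  simp only [mulVec_mulVec, Matrix.mul_assoc]

theorem eq_mulVec_of_mulVec_reduced_eq [DecidableEq n] [CommRing R]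
    {G : Matrix m m R} {Z : Matrix m n R} (hZGZ : IsUnit (Zᵀ * G * Z)) {w : n → R} {b : m → R}
    (h : (Zᵀ * G * Z) *ᵥ w = Zᵀ *ᵥ b) :
    Z *ᵥ w = (Z * (Zᵀ * G * Z)⁻¹ * Zᵀ) *ᵥ b := by
  have hdet : IsUnit (Zᵀ * G * Z).det := (isUnit_iff_isUnit_det _).mp hZGZ
  rw [← mulVec_mulVec, ← mulVec_mulVec, ← h, mulVec_mulVec w (Zᵀ * G * Z)⁻¹,
    nonsing_inv_mul _ hdet, one_mulVec]

end Matrix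

theorem stmt13_general {n q : ℕ} (G : Matrix (Fin n) (Fin n) ℝ)
    (U : Matrix (Fin n) (Fin q) ℝ)
    (Z : Matrix (Fin n) (Fin (n - q)) ℝ)
    (hZr : LinearMap.range Z.mulVecLin = LinearMap.ker Uᵀ.mulVecLin)
    (hZGZ : IsUnit (Zᵀ * G * Z))
    (b : Fin n → ℝ) (s : Fin n → ℝ) (t : Fin q → ℝ)
    (h1 : G.mulVec s + U.mulVec t = b)
    (h2 : Uᵀ.mulVec s = 0) :
    s = (Z * (Zᵀ * G * Z)⁻¹ * Zᵀ).mulVec b := by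
  obtain ⟨w, rfl⟩ : s ∈ LinearMap.range Z.mulVecLin := hZr ▸ h2
  have hZU : Zᵀ * U = 0 := by
    simpa using congrArg transpose (mul_eq_zero_of_range_mulVecLin_le_ker hZr.le)
  exact eq_mulVec_of_mulVec_reduced_eq hZGZ (mulVec_reduced_eq_of_saddle_point hZU h1)

theorem stmt13 {n q : ℕ} (G : Matrix (Fin n) (Fin n) ℝ) (hGinv : IsUnit G)
    (U : Matrix (Fin n) (Fin q) ℝ) (hU : Uᵀ * U = 1)
    (Z : Matrix (Fin n) (Fin (n - q)) ℝ) (hZ : Zᵀ * Z = 1)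
    (hZr : LinearMap.range Z.mulVecLin = LinearMap.ker Uᵀ.mulVecLin)
    (hZGZ : IsUnit (Zᵀ * G * Z))
    (b : Fin n → ℝ) (s : Fin n → ℝ) (t : Fin q → ℝ)
    (h1 : G.mulVec s + U.mulVec t = b)
    (h2 : Uᵀ.mulVec s = 0) :
    s = (Z * (Zᵀ * G * Z)⁻¹ * Zᵀ).mulVec b :=
  stmt13_general G U Z hZr hZGZ b s t h1 h2
end

section
/- Let Π be the orthogonal projector onto null(B) and suppose w solves ΠAΠ w = Π(f − A x_p). Then x_n := Πw satisfies B x_n = 0 exactly, and Zᵀ(A(x_p + x_n) − f) = 0 where Z has orthonormal columns spanning null(B). -/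
open Matrix

namespace Matrix

variable {l m n R : Type*} [Fintype m] [Fintype n] [CommRing R]

theorem mulVec_mulVec_eq_zero_of_range_le_ker {B : Matrix l m R} {Z : Matrix m n R}
    (h : LinearMap.range Z.mulVecLin ≤ LinearMap.ker B.mulVecLin) (v : n → R) :
    B *ᵥ (Z *ᵥ v) = 0 :=
  h ⟨v, rfl⟩

theorem mulVec_mulVec_mul_of_mul_eq_one [DecidableEq n] {M : Matrix m n R} {N : Matrix n m R}
    (h : N * M = 1) (v : m → R) : N *ᵥ ((M * N) *ᵥ v) = N *ᵥ v := by
  rw [mulVec_mulVec, ← Matrix.mul_assoc, h, Matrix.one_mul]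

end Matrix

theorem stmt19 {m n k : ℕ} (A : Matrix (Fin n) (Fin n) ℝ)
    (B : Matrix (Fin m) (Fin n) ℝ) (f xp : Fin n → ℝ)
    (Z : Matrix (Fin n) (Fin k) ℝ) (hZ : Zᵀ * Z = 1)
    (hZr : LinearMap.range Z.mulVecLin = LinearMap.ker B.mulVecLin)
    (w : Fin n → ℝ)
    (hw : ((Z * Zᵀ) * A * (Z * Zᵀ)).mulVec w
        = (Z * Zᵀ).mulVec (f - A.mulVec xp)) :
    B.mulVec ((Z * Zᵀ).mulVec w) = 0 ∧
    Zᵀ.mulVec (A.mulVec (xp + (Z * Zᵀ).mulVec w) - f) = 0 := by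
  constructor
  · rw [← mulVec_mulVec]
    exact mulVec_mulVec_eq_zero_of_range_le_ker hZr.le _
  · -- `Zᵀ (Z Zᵀ) = Zᵀ` strips both projectors from `hw` once `Zᵀ` is applied to it.
    have hreduced : Zᵀ *ᵥ (A *ᵥ ((Z * Zᵀ) *ᵥ w)) = Zᵀ *ᵥ (f - A *ᵥ xp) := by
      have h := congrArg (Zᵀ *ᵥ ·) hw
      rwa [mulVec_mulVec_mul_of_mul_eq_one hZ, Matrix.mul_assoc (Z * Zᵀ), ← mulVec_mulVec,
        mulVec_mulVec_mul_of_mul_eq_one hZ, ← mulVec_mulVec] at h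
    rw [mulVec_sub, mulVec_add, mulVec_add, hreduced, mulVec_sub]
    abel
end
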